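/- Let P be a polynomial basis with P = X V, M = V^{-1} M_X V and O = V^{-1} O_X V. Then for any polynomial y = P a, ∫^x P_i(x) P_j(t) y(t) dt = P (P_i(M) O P_j(M) a), where P_i(M) denotes the polynomial P_i evaluated at the matrix M. -/
import Mathlib


open Polynomial Finset

/-- Matrix-vector product of an infinite matrix with a coefficient sequence. -/
noncomputable def matVec (M : ℕ → ℕ → ℝ) (v : ℕ → ℝ) : ℕ → ℝ := fun i => ∑' j, M i j * v j

/-- Product of infinite matrices (well defined for the row/column finite matrices used here). -/
noncomputable def matMul (A B : ℕ → ℕ → ℝ) : ℕ → ℕ → ℝ := fun i j => ∑' k, A i k * B k j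

/-- Powers of an infinite matrix. -/
noncomputable def matPow (M : ℕ → ℕ → ℝ) : ℕ → (ℕ → ℕ → ℝ)
  | 0 => fun i j => if i = j then (1 : ℝ) else 0
  | k + 1 => matMul (matPow M k) M

/-- Shift matrix `M_X` (multiplication by `x` in the power basis). -/
noncomputable def MX : ℕ → ℕ → ℝ := fun r c => if r = c + 1 then (1 : ℝ) else 0

/-- Differentiation matrix `N_X` in the power basis. -/
noncomputable def NXmat : ℕ → ℕ → ℝ := fun r c => if c = r + 1 then (r + 1 : ℝ) else 0

/-- Integration matrix `O_X` in the power basis. -/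
noncomputable def OX : ℕ → ℕ → ℝ := fun r c => if r = c + 1 then (1 : ℝ) / (c + 1) else 0

/-- Evaluation of a (real) polynomial at an infinite matrix. -/
noncomputable def polyEvalMat (p : Polynomial ℝ) (M : ℕ → ℕ → ℝ) : ℕ → ℕ → ℝ :=
  ∑ k ∈ Finset.range (p.natDegree + 1), p.coeff k • matPow M k

/-- Formal antiderivative (with zero constant term) of a polynomial. -/
noncomputable def antider (p : Polynomial ℝ) : Polynomial ℝ :=
  p.sum fun n c => Polynomial.C (c / (n + 1)) * Polynomial.X ^ (n + 1)

/-- Vector supported below `n`. -/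
def Supp (n : ℕ) (a : ℕ → ℝ) : Prop := ∀ m, n ≤ m → a m = 0

/-- Matrix vanishing below the `d`-th subdiagonal. -/
def Band (d : ℕ) (A : ℕ → ℕ → ℝ) : Prop := ∀ i j, j + d < i → A i j = 0

lemma tsum_eq_range {f : ℕ → ℝ} {n : ℕ} (h : ∀ m, n ≤ m → f m = 0) :
    ∑' m, f m = ∑ m ∈ Finset.range n, f m :=
  tsum_eq_sum (fun b hb => h b (by simpa using hb))

lemma Supp.mono {a : ℕ → ℝ} {n m : ℕ} (h : Supp n a) (hnm : n ≤ m) : Supp m a :=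
  fun k hk => h k (le_trans hnm hk)

lemma Band.mono {A : ℕ → ℕ → ℝ} {d d' : ℕ} (h : Band d A) (hd : d ≤ d') : Band d' A :=
  fun i j hij => h i j (by omega)

lemma matVec_eq_sum {A : ℕ → ℕ → ℝ} {a : ℕ → ℝ} {n : ℕ} (ha : Supp n a) (k : ℕ) :
    matVec A a k = ∑ j ∈ Finset.range n, A k j * a j :=
  tsum_eq_range (fun m hm => by rw [ha m hm, mul_zero])

lemma matMul_eq_sum {A B : ℕ → ℕ → ℝ} {d : ℕ} (hB : Band d B) (i j : ℕ) :
    matMul A B i j = ∑ k ∈ Finset.range (j + d + 1), A i k * B k j :=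
  tsum_eq_range (fun m hm => by rw [hB m j (by omega), mul_zero])

lemma Band.matMul {A B : ℕ → ℕ → ℝ} {d1 d2 : ℕ} (hA : Band d1 A) (hB : Band d2 B) :
    Band (d1 + d2) (matMul A B) := by
  intro i j hij
  rw [matMul_eq_sum hB]
  refine Finset.sum_eq_zero fun k hk => ?_
  rw [hA i k (by simp only [Finset.mem_range] at hk; omega), zero_mul]

lemma matVec_supp {A : ℕ → ℕ → ℝ} {a : ℕ → ℝ} {d n : ℕ} (hA : Band d A) (ha : Supp n a) :
    Supp (n + d) (matVec A a) := by
  intro k hk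
  rw [matVec_eq_sum ha]
  exact Finset.sum_eq_zero fun jj hj =>
    by rw [hA k jj (by simp only [Finset.mem_range] at hj; omega), zero_mul]

lemma matVec_matMul {A B : ℕ → ℕ → ℝ} {a : ℕ → ℝ} {d n : ℕ} (hB : Band d B) (ha : Supp n a) :
    matVec (matMul A B) a = matVec A (matVec B a) := by
  funext k
  rw [matVec_eq_sum ha, matVec_eq_sum (matVec_supp hB ha)]
  have h1 : ∀ jj ∈ Finset.range n, matMul A B k jj * a jj =
      ∑ l ∈ Finset.range (n + d), A k l * B l jj * a jj := by
    intro jj hj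
    simp only [Finset.mem_range] at hj
    rw [matMul_eq_sum hB, Finset.sum_mul]
    apply Finset.sum_subset
    · intro x hx; simp only [Finset.mem_range] at hx ⊢; omega
    · intro x _ hx'
      simp only [Finset.mem_range, not_lt] at hx'
      rw [hB x jj (by omega)]; ring
  rw [Finset.sum_congr rfl h1, Finset.sum_comm]
  refine Finset.sum_congr rfl fun l _ => ?_
  rw [matVec_eq_sum ha, Finset.mul_sum]
  exact Finset.sum_congr rfl fun jj _ => by ring

lemma matVec_delta (a : ℕ → ℝ) (k : ℕ) :
    matVec (fun i j => if i = j then (1:ℝ) else 0) a k = a k := by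
  unfold matVec
  rw [tsum_eq_single k (fun j hj => by simp [Ne.symm hj])]
  simp

lemma matVec_MX (c : ℕ → ℝ) (k : ℕ) :
    matVec MX c k = if k = 0 then 0 else c (k - 1) := by
  unfold matVec MX
  cases k with
  | zero => simp
  | succ k =>
    rw [if_neg (Nat.succ_ne_zero k)]
    rw [tsum_eq_single k (fun j hj => by
      rw [if_neg (fun h => hj (Nat.succ_injective h).symm), zero_mul])]
    simp

lemma matVec_OX (c : ℕ → ℝ) (k : ℕ) :
    matVec OX c k = if k = 0 then 0 else c (k - 1) / k := by
  unfold matVec OX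
  cases k with
  | zero => simp
  | succ k =>
    rw [if_neg (Nat.succ_ne_zero k)]
    rw [tsum_eq_single k (fun j hj => by
      rw [if_neg (fun h => hj (Nat.succ_injective h).symm), zero_mul])]
    rw [if_pos rfl]
    push_cast
    simp [div_eq_mul_inv]
    ring

lemma antider_coeff_zero (p : Polynomial ℝ) : (antider p).coeff 0 = 0 := by
  unfold antider
  rw [Polynomial.sum_def, Polynomial.finset_sum_coeff]
  refine Finset.sum_eq_zero fun m _ => ?_
  simp [coeff_C_mul, coeff_X_pow]

lemma antider_coeff_succ (p : Polynomial ℝ) (k : ℕ) :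
    (antider p).coeff (k + 1) = p.coeff k / (k + 1) := by
  unfold antider
  rw [Polynomial.sum_def, Polynomial.finset_sum_coeff]
  have h1 : ∀ m ∈ p.support,
      (Polynomial.C (p.coeff m / (m + 1)) * Polynomial.X ^ (m + 1)).coeff (k + 1)
        = if m = k then p.coeff k / (k + 1) else 0 := by
    intro m _
    rw [coeff_C_mul, coeff_X_pow]
    by_cases h : m = k
    · subst h; simp
    · rw [if_neg (by omega), if_neg h, mul_zero]
  rw [Finset.sum_congr rfl h1, Finset.sum_ite_eq' p.support k]
  by_cases h : k ∈ p.support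
  · rw [if_pos h]
  · rw [if_neg h]
    rw [Polynomial.notMem_support_iff] at h
    rw [h, zero_div]

lemma matVec_matSmul (A : ℕ → ℕ → ℝ) (c : ℝ) (a : ℕ → ℝ) (k : ℕ) :
    matVec (fun i j => c * A i j) a k = c * matVec A a k := by
  unfold matVec
  rw [← tsum_mul_left]
  congr 1; funext jj; ring

lemma matVec_matSum {ι : Type*} {n : ℕ} (s : Finset ι) (A : ι → ℕ → ℕ → ℝ) {a : ℕ → ℝ}
    (ha : Supp n a) (k : ℕ) :
    matVec (fun i j => ∑ t ∈ s, A t i j) a k = ∑ t ∈ s, matVec (A t) a k := by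
  rw [matVec_eq_sum ha]
  calc ∑ jj ∈ Finset.range n, (∑ t ∈ s, A t k jj) * a jj
      = ∑ jj ∈ Finset.range n, ∑ t ∈ s, A t k jj * a jj := by
        refine Finset.sum_congr rfl fun jj _ => ?_; rw [Finset.sum_mul]
    _ = ∑ t ∈ s, ∑ jj ∈ Finset.range n, A t k jj * a jj := Finset.sum_comm
    _ = ∑ t ∈ s, matVec (A t) a k :=
        Finset.sum_congr rfl fun t _ => (matVec_eq_sum ha k).symm

lemma matVec_vecSmul (A : ℕ → ℕ → ℝ) (c : ℝ) (v : ℕ → ℝ) (k : ℕ) :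
    matVec A (fun i => c * v i) k = c * matVec A v k := by
  unfold matVec
  rw [← tsum_mul_left]
  congr 1; funext jj; ring

lemma matVec_vecSum {ι : Type*} {A : ℕ → ℕ → ℝ} {n : ℕ} (s : Finset ι) (v : ι → ℕ → ℝ)
    (hv : ∀ t ∈ s, Supp n (v t)) (k : ℕ) :
    matVec A (fun i => ∑ t ∈ s, v t i) k = ∑ t ∈ s, matVec A (v t) k := by
  have hsum : Supp n (fun i => ∑ t ∈ s, v t i) := fun m hm =>
    Finset.sum_eq_zero fun t ht => hv t ht m hm
  rw [matVec_eq_sum hsum]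
  calc ∑ jj ∈ Finset.range n, A k jj * ∑ t ∈ s, v t jj
      = ∑ jj ∈ Finset.range n, ∑ t ∈ s, A k jj * v t jj := by
        refine Finset.sum_congr rfl fun jj _ => ?_; rw [Finset.mul_sum]
    _ = ∑ t ∈ s, ∑ jj ∈ Finset.range n, A k jj * v t jj := Finset.sum_comm
    _ = ∑ t ∈ s, matVec A (v t) k :=
        Finset.sum_congr rfl fun t ht => (matVec_eq_sum (hv t ht) k).symm

lemma band_MX : Band 1 MX := by
  intro i j hij
  unfold MX
  rw [if_neg (by omega)]

lemma band_OX : Band 1 OX := by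
  intro i j hij
  unfold OX
  rw [if_neg (by omega)]

lemma band_matPow {M : ℕ → ℕ → ℝ} (hM : Band 1 M) : ∀ k, Band k (matPow M k) := by
  intro k
  induction k with
  | zero => intro i j hij; unfold matPow; rw [if_neg (by omega)]
  | succ k ih => exact (ih.matMul hM : Band (k + 1) _)

lemma band_polyEvalMat {M : ℕ → ℕ → ℝ} (hM : Band 1 M) (q : Polynomial ℝ) :
    Band q.natDegree (polyEvalMat q M) := by
  intro i j hij
  unfold polyEvalMat
  rw [Finset.sum_apply, Finset.sum_apply]
  refine Finset.sum_eq_zero fun t ht => ?_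
  simp only [Finset.mem_range] at ht
  simp only [Pi.smul_apply, smul_eq_mul]
  rw [band_matPow hM t i j (by omega), mul_zero]

lemma polyEvalMat_apply (q : Polynomial ℝ) (M : ℕ → ℕ → ℝ) :
    polyEvalMat q M = fun i j => ∑ t ∈ Finset.range (q.natDegree + 1),
      q.coeff t * matPow M t i j := by
  funext i j
  unfold polyEvalMat
  rw [Finset.sum_apply, Finset.sum_apply]
  simp [Pi.smul_apply, smul_eq_mul]

section Ctx

variable {P : ℕ → Polynomial ℝ} {V W : ℕ → ℕ → ℝ}

lemma band_V (hdeg : ∀ i, (P i).degree = i) (hV : ∀ i j, V i j = (P j).coeff i) :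
    Band 0 V := by
  intro i j hij
  rw [hV]
  exact Polynomial.coeff_eq_zero_of_degree_lt (by rw [hdeg j]; exact_mod_cast (by omega : j < i))

lemma V_diag_ne_zero (hdeg : ∀ i, (P i).degree = i) (hV : ∀ i j, V i j = (P j).coeff i)
    (j : ℕ) : V j j ≠ 0 := by
  rw [hV]
  exact Polynomial.coeff_ne_zero_of_eq_degree (hdeg j)

lemma band_W (hdeg : ∀ i, (P i).degree = i) (hV : ∀ i j, V i j = (P j).coeff i)
    (hWV : ∀ i j, matMul W V i j = if i = j then 1 else 0) :
    Band 0 W := by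
  have key : ∀ j i, j < i → W i j = 0 := by
    intro j
    induction j using Nat.strong_induction_on with
    | _ j IH =>
      intro i hji
      have h := hWV i j
      rw [if_neg (by omega)] at h
      have hb : Band 0 V := band_V hdeg hV
      have hsum : matMul W V i j = ∑ k ∈ Finset.range (j + 0 + 1), W i k * V k j :=
        matMul_eq_sum hb i j
      rw [h] at hsum
      rw [Finset.sum_range_succ] at hsum
      have hz : ∑ k ∈ Finset.range j, W i k * V k j = 0 :=
        Finset.sum_eq_zero fun k hk => by
          simp only [Finset.mem_range] at hk
          rw [IH k (by omega) i (by omega), zero_mul]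
      rw [hz, zero_add] at hsum
      by_contra hc
      exact (mul_ne_zero hc (V_diag_ne_zero hdeg hV j)) hsum.symm
  intro i j hij
  exact key j i (by omega)

lemma matVec_VW (hVW : ∀ i j, matMul V W i j = if i = j then 1 else 0)
    (bW : Band 0 W) {c : ℕ → ℝ} {n : ℕ} (hc : Supp n c) :
    matVec V (matVec W c) = c := by
  rw [← matVec_matMul bW hc]
  have hid : matMul V W = fun i j => if i = j then (1:ℝ) else 0 := by
    funext i j; exact hVW i j
  rw [hid]
  funext k
  exact matVec_delta c k

lemma rep_V_coeff (hV : ∀ i j, V i j = (P j).coeff i) {b : ℕ → ℝ} {n N : ℕ}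
    (hb : Supp n b) (hnN : n ≤ N) (k : ℕ) :
    (∑ m ∈ Finset.range N, b m • P m).coeff k = matVec V b k := by
  rw [matVec_eq_sum (hb.mono hnN), Polynomial.finset_sum_coeff]
  refine Finset.sum_congr rfl fun m _ => ?_
  rw [Polynomial.coeff_smul, smul_eq_mul, hV, mul_comm]

end Ctx

lemma band_M {P : ℕ → Polynomial ℝ} {V W M : ℕ → ℕ → ℝ}
    (hdeg : ∀ i, (P i).degree = i) (hV : ∀ i j, V i j = (P j).coeff i)
    (hWV : ∀ i j, matMul W V i j = if i = j then 1 else 0)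
    (hM : M = matMul (matMul W MX) V) : Band 1 M := by
  rw [hM]
  exact ((band_W hdeg hV hWV).matMul band_MX).matMul (band_V hdeg hV)

lemma rep_M {P : ℕ → Polynomial ℝ} {V W M : ℕ → ℕ → ℝ}
    (hdeg : ∀ i, (P i).degree = i) (hV : ∀ i j, V i j = (P j).coeff i)
    (hWV : ∀ i j, matMul W V i j = if i = j then 1 else 0)
    (hVW : ∀ i j, matMul V W i j = if i = j then 1 else 0)
    (hM : M = matMul (matMul W MX) V)
    {b : ℕ → ℝ} {p : Polynomial ℝ} {n : ℕ} (hb : Supp n b)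
    (hbc : ∀ k, matVec V b k = p.coeff k) :
    Supp (n + 1) (matVec M b) ∧
      ∀ k, matVec V (matVec M b) k = (Polynomial.X * p).coeff k := by
  have bV := band_V hdeg hV
  have bW := band_W hdeg hV hWV
  refine ⟨matVec_supp (band_M hdeg hV hWV hM) hb, fun k => ?_⟩
  have h1 : matVec M b = matVec W (matVec MX (matVec V b)) := by
    rw [hM, matVec_matMul bV hb, matVec_matMul band_MX (matVec_supp bV hb)]
  rw [h1, matVec_VW hVW bW (matVec_supp band_MX (matVec_supp bV hb)), matVec_MX]
  cases k with
  | zero => simp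
  | succ k =>
    rw [if_neg (Nat.succ_ne_zero k)]
    simp only [Nat.add_sub_cancel]
    rw [hbc k, Polynomial.coeff_X_mul]

lemma band_O {P : ℕ → Polynomial ℝ} {V W O : ℕ → ℕ → ℝ}
    (hdeg : ∀ i, (P i).degree = i) (hV : ∀ i j, V i j = (P j).coeff i)
    (hWV : ∀ i j, matMul W V i j = if i = j then 1 else 0)
    (hO : O = matMul (matMul W OX) V) : Band 1 O := by
  rw [hO]
  exact ((band_W hdeg hV hWV).matMul band_OX).matMul (band_V hdeg hV)

lemma rep_O {P : ℕ → Polynomial ℝ} {V W O : ℕ → ℕ → ℝ}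
    (hdeg : ∀ i, (P i).degree = i) (hV : ∀ i j, V i j = (P j).coeff i)
    (hWV : ∀ i j, matMul W V i j = if i = j then 1 else 0)
    (hVW : ∀ i j, matMul V W i j = if i = j then 1 else 0)
    (hO : O = matMul (matMul W OX) V)
    {b : ℕ → ℝ} {p : Polynomial ℝ} {n : ℕ} (hb : Supp n b)
    (hbc : ∀ k, matVec V b k = p.coeff k) :
    Supp (n + 1) (matVec O b) ∧
      ∀ k, matVec V (matVec O b) k = (antider p).coeff k := by
  have bV := band_V hdeg hV
  have bW := band_W hdeg hV hWV
  refine ⟨matVec_supp (band_O hdeg hV hWV hO) hb, fun k => ?_⟩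
  have h1 : matVec O b = matVec W (matVec OX (matVec V b)) := by
    rw [hO, matVec_matMul bV hb, matVec_matMul band_OX (matVec_supp bV hb)]
  rw [h1, matVec_VW hVW bW (matVec_supp band_OX (matVec_supp bV hb)), matVec_OX]
  cases k with
  | zero => rw [if_pos rfl, antider_coeff_zero]
  | succ k =>
    rw [if_neg (Nat.succ_ne_zero k)]
    simp only [Nat.add_sub_cancel]
    rw [hbc k, antider_coeff_succ]
    push_cast
    ring

lemma rep_pow {P : ℕ → Polynomial ℝ} {V W M : ℕ → ℕ → ℝ}
    (hdeg : ∀ i, (P i).degree = i) (hV : ∀ i j, V i j = (P j).coeff i)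
    (hWV : ∀ i j, matMul W V i j = if i = j then 1 else 0)
    (hVW : ∀ i j, matMul V W i j = if i = j then 1 else 0)
    (hM : M = matMul (matMul W MX) V) :
    ∀ (k : ℕ) {b : ℕ → ℝ} {p : Polynomial ℝ} {n : ℕ}, Supp n b →
      (∀ m, matVec V b m = p.coeff m) →
      Supp (n + k) (matVec (matPow M k) b) ∧
        ∀ m, matVec V (matVec (matPow M k) b) m = (Polynomial.X ^ k * p).coeff m := by
  intro k
  induction k with
  | zero =>
    intro b p n hb hbc
    have hid : matVec (matPow M 0) b = b := by
      have h0 : matPow M 0 = fun i j => if i = j then (1:ℝ) else 0 := rfl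
      rw [h0]; funext m; exact matVec_delta b m
    rw [hid]
    exact ⟨hb.mono (by omega), fun m => by rw [hbc m, pow_zero, one_mul]⟩
  | succ k ih =>
    intro b p n hb hbc
    have hstep : matVec (matPow M (k + 1)) b = matVec (matPow M k) (matVec M b) := by
      have h0 : matPow M (k + 1) = matMul (matPow M k) M := rfl
      rw [h0]
      exact matVec_matMul (band_M hdeg hV hWV hM) hb
    obtain ⟨h1s, h1c⟩ := rep_M hdeg hV hWV hVW hM hb hbc
    obtain ⟨h2s, h2c⟩ := ih h1s h1c
    rw [hstep]
    refine ⟨h2s.mono (by omega), fun m => ?_⟩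
    rw [h2c m]
    congr 1
    ring

lemma rep_polyEval {P : ℕ → Polynomial ℝ} {V W M : ℕ → ℕ → ℝ}
    (hdeg : ∀ i, (P i).degree = i) (hV : ∀ i j, V i j = (P j).coeff i)
    (hWV : ∀ i j, matMul W V i j = if i = j then 1 else 0)
    (hVW : ∀ i j, matMul V W i j = if i = j then 1 else 0)
    (hM : M = matMul (matMul W MX) V)
    (q : Polynomial ℝ) {b : ℕ → ℝ} {p : Polynomial ℝ} {n : ℕ} (hb : Supp n b)
    (hbc : ∀ m, matVec V b m = p.coeff m) :
    Supp (n + q.natDegree) (matVec (polyEvalMat q M) b) ∧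
      ∀ m, matVec V (matVec (polyEvalMat q M) b) m = (q * p).coeff m := by
  set d := q.natDegree with hd
  have hrep := fun t => rep_pow hdeg hV hWV hVW hM t hb hbc
  have hfun : matVec (polyEvalMat q M) b = fun i =>
      ∑ t ∈ Finset.range (d + 1), q.coeff t * matVec (matPow M t) b i := by
    funext i2
    rw [polyEvalMat_apply, matVec_matSum _ _ hb]
    exact Finset.sum_congr rfl fun t _ => matVec_matSmul (matPow M t) (q.coeff t) b i2
  have hsupps : ∀ t ∈ Finset.range (d + 1),
      Supp (n + d) (fun i2 => q.coeff t * matVec (matPow M t) b i2) := by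
    intro t ht m hm
    simp only [Finset.mem_range] at ht
    show q.coeff t * matVec (matPow M t) b m = 0
    rw [(hrep t).1 m (by omega), mul_zero]
  constructor
  · rw [hfun]
    exact fun m hm => Finset.sum_eq_zero fun t ht => hsupps t ht m hm
  · intro m
    rw [hfun, matVec_vecSum _ _ hsupps m]
    have h2 : ∀ t ∈ Finset.range (d + 1),
        matVec V (fun i2 => q.coeff t * matVec (matPow M t) b i2) m
          = q.coeff t * (Polynomial.X ^ t * p).coeff m := fun t _ => by
      rw [matVec_vecSmul, (hrep t).2 m]
    rw [Finset.sum_congr rfl h2]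
    have hq := Polynomial.as_sum_range' q (d + 1) (Nat.lt_succ_self d)
    calc ∑ t ∈ Finset.range (d + 1), q.coeff t * (Polynomial.X ^ t * p).coeff m
        = ∑ t ∈ Finset.range (d + 1),
            ((Polynomial.monomial t (q.coeff t)) * p).coeff m := by
          refine Finset.sum_congr rfl fun t _ => ?_
          rw [← Polynomial.C_mul_X_pow_eq_monomial, mul_assoc, Polynomial.coeff_C_mul]
      _ = ((∑ t ∈ Finset.range (d + 1), Polynomial.monomial t (q.coeff t)) * p).coeff m := by
          rw [Finset.sum_mul, Polynomial.finset_sum_coeff]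
      _ = (q * p).coeff m := by rw [← hq]

/-- `∫^x P_i(x) P_j(t) y(t) dt = P (P_i(M) O P_j(M) a)` for `y = P a`. -/
theorem int_basis_in_basis
    (P : ℕ → Polynomial ℝ) (hdeg : ∀ i, (P i).degree = i)
    (V : ℕ → ℕ → ℝ) (hV : ∀ i j, V i j = (P j).coeff i)
    (W : ℕ → ℕ → ℝ)
    (hWV : ∀ i j, matMul W V i j = if i = j then 1 else 0)
    (hVW : ∀ i j, matMul V W i j = if i = j then 1 else 0)
    (M : ℕ → ℕ → ℝ) (hM : M = matMul (matMul W MX) V)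
    (O : ℕ → ℕ → ℝ) (hO : O = matMul (matMul W OX) V)
    (i j : ℕ)
    (a : ℕ → ℝ) (n : ℕ) (ha : ∀ m, n ≤ m → a m = 0) :
    P i * antider (P j * (∑ m ∈ Finset.range n, a m • P m)) =
      ∑ k ∈ Finset.range (i + j + n + 2),
        matVec (matMul (matMul (polyEvalMat (P i) M) O) (polyEvalMat (P j) M)) a k • P k := by
  have hsa : Supp n a := ha
  have h0c : ∀ k, matVec V a k =
      (∑ m ∈ Finset.range n, a m • P m).coeff k :=
    fun k => (rep_V_coeff hV hsa (le_refl n) k).symm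
  have hj' : (P j).natDegree = j := Polynomial.natDegree_eq_of_degree_eq_some (hdeg j)
  have hi' : (P i).natDegree = i := Polynomial.natDegree_eq_of_degree_eq_some (hdeg i)
  obtain ⟨h1s, h1c⟩ := rep_polyEval hdeg hV hWV hVW hM (P j) hsa h0c
  rw [hj'] at h1s
  obtain ⟨h2s, h2c⟩ := rep_O hdeg hV hWV hVW hO h1s h1c
  obtain ⟨h3s, h3c⟩ := rep_polyEval hdeg hV hWV hVW hM (P i) h2s h2c
  rw [hi'] at h3s
  have hsplit : matVec (matMul (matMul (polyEvalMat (P i) M) O) (polyEvalMat (P j) M)) a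
      = matVec (polyEvalMat (P i) M) (matVec O (matVec (polyEvalMat (P j) M) a)) := by
    rw [matVec_matMul (band_polyEvalMat (band_M hdeg hV hWV hM) (P j)) hsa,
      matVec_matMul (band_O hdeg hV hWV hO) h1s]
  rw [hsplit]
  refine Polynomial.ext fun k => ?_
  rw [rep_V_coeff hV h3s (by omega) k, h3c k]
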